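/- Let H be a triangular Hopf algebra with R-matrix R. Then the subset Lie(H) := {ξ ∈ H : Δ(ξ) = ξ⊗1 + Σ R₂ ⊗ ad(R₁)(ξ)} is invariant under the adjoint action of H on itself: if ξ ∈ Lie(H) and h ∈ H, then ad(h)(ξ) ∈ Lie(H). -/

import Mathlib

open TensorProduct

noncomputable section

variable (k : Type*) [Field k] (H : Type*) [Ring H] [HopfAlgebra k H]

/-- The comultiplication of `H` as a linear map. -/
noncomputable def comulL : H →ₗ[k] H ⊗[k] H := Coalgebra.comul

/-- The counit of `H` as a linear map. -/
noncomputable def counitL : H →ₗ[k] k := Coalgebra.counit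

/-- The antipode of `H`. -/
noncomputable def anti : H →ₗ[k] H := HopfAlgebra.antipode (R := k)

/-- `F` together with its inverse `Finv` is a twisting (Drinfeld) cocycle:
`F` is invertible, `(Δ⊗id)(F)·(F⊗1) = (id⊗Δ)(F)·(1⊗F)` and `(ε⊗id)(F) = 1 = (id⊗ε)(F)`. -/
def IsCocycle (F Finv : H ⊗[k] H) : Prop :=
  F * Finv = 1 ∧ Finv * F = 1 ∧
  (TensorProduct.assoc k H H H) ((TensorProduct.map (comulL k H) LinearMap.id F) * (F ⊗ₜ 1))
    = (TensorProduct.map LinearMap.id (comulL k H) F) * ((1 : H) ⊗ₜ F) ∧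
  (TensorProduct.lid k H) (TensorProduct.map (counitL k H) LinearMap.id F) = 1 ∧
  (TensorProduct.rid k H) (TensorProduct.map LinearMap.id (counitL k H) F) = 1

/-- `ϑ = Σ γ(F₁)F₂`. -/
noncomputable def theta (F : H ⊗[k] H) : H :=
  LinearMap.mul' k H (TensorProduct.map (anti k H) LinearMap.id F)

/-- `ζ = Σ F̄₂ γ⁻¹(F̄₁)`, where `γinv` is the inverse of the antipode and `Finv = Σ F̄₁⊗F̄₂`. -/
noncomputable def zeta (γinv : H →ₗ[k] H) (Finv : H ⊗[k] H) : H :=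
  LinearMap.mul' k H (TensorProduct.map LinearMap.id γinv ((TensorProduct.comm k H H) Finv))

/-- `R` (with inverse `Rinv`) is a triangular structure: `R` is invertible,
`R Δ(h) = Δᵒᵖ(h) R`, the two hexagon identities `(Δ⊗id)(R) = R₁₃R₂₃`,
`(id⊗Δ)(R) = R₁₃R₁₂` hold, and `R₂₁ R = 1`. -/
def IsTriangular (R Rinv : H ⊗[k] H) : Prop :=
  R * Rinv = 1 ∧ Rinv * R = 1 ∧
  (∀ h : H, R * comulL k H h = (TensorProduct.comm k H H) (comulL k H h) * R) ∧
  (TensorProduct.assoc k H H H) (TensorProduct.map (comulL k H) LinearMap.id R)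
    = (TensorProduct.map LinearMap.id (TensorProduct.mk k H H 1) R) * ((1 : H) ⊗ₜ R) ∧
  (TensorProduct.map LinearMap.id (comulL k H) R)
    = (TensorProduct.map LinearMap.id (TensorProduct.mk k H H 1) R) *
      ((TensorProduct.assoc k H H H) (R ⊗ₜ (1 : H))) ∧
  ((TensorProduct.comm k H H) R) * R = 1

/-- `bcomp U V x y = (U x) ∘ₗ (V y)`, bilinearly in `x, y`. -/
noncomputable def bcomp {A B C : Type*} [AddCommMonoid A] [AddCommMonoid B] [AddCommMonoid C]
    [Module k A] [Module k B] [Module k C]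
    (U : H →ₗ[k] B →ₗ[k] C) (V : H →ₗ[k] A →ₗ[k] B) : H →ₗ[k] H →ₗ[k] (A →ₗ[k] C) :=
  ((((LinearMap.llcomp k A B C) ∘ₗ U).flip) ∘ₗ V).flip

/-- Given an action `α` of `H` on `M`, the induced action of `H ⊗ H` on `M ⊗ M`:
`pairAct α (x ⊗ y) (a ⊗ b) = (α x a) ⊗ (α y b)`. -/
noncomputable def pairAct {M : Type*} [AddCommMonoid M] [Module k M]
    (α : H →ₗ[k] M →ₗ[k] M) : H ⊗[k] H →ₗ[k] (M ⊗[k] M →ₗ[k] M ⊗[k] M) :=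
  (TensorProduct.homTensorHomMap (RingHom.id k) M M M M) ∘ₗ (TensorProduct.map α α)

/-- `sandwich α β (x ⊗ y) a = α x * a * β y`. -/
noncomputable def sandwich {E : Type*} [Ring E] [Algebra k E]
    (α β : H →ₗ[k] E) : H ⊗[k] H →ₗ[k] E →ₗ[k] E :=
  TensorProduct.lift (bcomp k H ((LinearMap.mul k E) ∘ₗ α) ((LinearMap.mul k E).flip ∘ₗ β))

/-- The adjoint action associated with `ρ : H →ₗ E`:
`adAct ρ h a = Σ ρ(h⁽¹⁾) a ρ(γ(h⁽²⁾))`. -/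
noncomputable def adAct {E : Type*} [Ring E] [Algebra k E]
    (ρ : H →ₗ[k] E) : H →ₗ[k] E →ₗ[k] E :=
  (sandwich k H ρ (ρ ∘ₗ anti k H)) ∘ₗ comulL k H

/-- The twisted comultiplication `Δ̃(h) = F⁻¹ Δ(h) F`. -/
noncomputable def comulTw (F Finv : H ⊗[k] H) : H →ₗ[k] H ⊗[k] H :=
  (LinearMap.mulRight k F) ∘ₗ (LinearMap.mulLeft k Finv) ∘ₗ comulL k H

/-- The twisted antipode `γ̃(h) = ϑ⁻¹ γ(h) ϑ`. -/
noncomputable def antiTw (ϑ ϑinv : H) : H →ₗ[k] H :=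
  (LinearMap.mulRight k ϑ) ∘ₗ (LinearMap.mulLeft k ϑinv) ∘ₗ anti k H

variable (A : Type*) [Ring A] [Algebra k A]

/-- `act` makes `A` a left `H`-module algebra:
`act` is a representation of `H`, `h•(ab) = Σ (h⁽¹⁾•a)(h⁽²⁾•b)` and `h•1 = ε(h)1`. -/
def IsModAlg (act : H →ₗ[k] Module.End k A) : Prop :=
  act 1 = 1 ∧ (∀ g h : H, act (g * h) = act g * act h) ∧
  (∀ (h : H) (a b : A),
    act h (a * b) = LinearMap.mul' k A ((pairAct k H act) (comulL k H h) (a ⊗ₜ b))) ∧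
  (∀ h : H, act h 1 = (counitL k H h) • (1 : A))

/-- The adjoint-type action of `H` on `End_k(A)`: `h.X = Σ ρ(h⁽¹⁾) ∘ X ∘ ρ(γ(h⁽²⁾))`. -/
noncomputable def dotAct (act : H →ₗ[k] Module.End k A) :
    H →ₗ[k] Module.End k A →ₗ[k] Module.End k A :=
  (sandwich k H (E := Module.End k A) act (act ∘ₗ anti k H)) ∘ₗ comulL k H

section LieH

/-- `ξ ∈ H` is quasi-primitive with respect to a comultiplication-type map `δ`, an
adjoint-type action `ad'` and an `R`-matrix `R₀`:
`δ(ξ) = ξ ⊗ 1 + Σ R₂ ⊗ ad'(R₁)(ξ)`. -/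
def IsQuasiPrimitive (δ : H →ₗ[k] H ⊗[k] H) (ad' : H →ₗ[k] H →ₗ[k] H)
    (R₀ : H ⊗[k] H) (ξ : H) : Prop :=
  δ ξ = ξ ⊗ₜ (1 : H) +
    (TensorProduct.map LinearMap.id (ad'.flip ξ)) ((TensorProduct.comm k H H) R₀)

end LieH

/-!
Let `Ad(h)(X) = Σ Δ(h⁽¹⁾) X Δ(γ(h⁽²⁾))` be the adjoint action of `H` on `H ⊗ H` through `Δ`;
since `Δ` is multiplicative, `Δ(ad(h)ξ) = Ad(h)(Δξ)`. The Sweedler calculus is done in the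
convolution algebra `WithConv (H →ₗ[k] H ⊗[k] H)`, with product `⋆`. There `Δ = ι₁ ⋆ ι₂` for
`ι₁ x = x ⊗ 1` and `ι₂ x = 1 ⊗ x`; the antipode is anti-comultiplicative in the form
`Δ ∘ γ = (ι₂ ∘ γ) ⋆ (ι₁ ∘ γ)`, since left and right convolution inverses of `Δ` agree;
coassociativity becomes associativity of `⋆`; and `ιᵢ ⋆ (ιᵢ ∘ γ) = 1`. This gives
`Ad(h)(ξ ⊗ 1) = ad(h)ξ ⊗ 1` and, since `u = R₂₁` satisfies `Δ(x) u = u Δᵒᵖ(x)`,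
`Ad(h)((id ⊗ ad(·)ξ)(u)) = (id ⊗ ad(·)ξ)(u (1 ⊗ h))`; as `ad` is an action, the latter is
`(id ⊗ ad(·)(ad(h)ξ))(u)`.
-/

open Coalgebra WithConv

section Convolution

variable {R C A B : Type*} [CommSemiring R] [AddCommMonoid C] [Module R C] [CoalgebraStruct R C]
  [Semiring A] [Algebra R A] [Semiring B] [Algebra R B]

lemma LinearMap.comp_convMul_of_map_mul_right (Λ : A →ₗ[R] B) (f g : WithConv (C →ₗ[R] A))
    (g' : WithConv (C →ₗ[R] B)) (h : ∀ z c, Λ (z * g c) = Λ z * g' c) :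
    Λ ∘ₗ (f * g).ofConv = (toConv (Λ ∘ₗ f.ofConv) * g').ofConv := by
  ext c
  simp [(ℛ R c).convMul_apply, h]

lemma LinearMap.comp_convMul_of_map_mul_left (Λ : A →ₗ[R] B) (f g : WithConv (C →ₗ[R] A))
    (f' : WithConv (C →ₗ[R] B)) (h : ∀ c z, Λ (f c * z) = f' c * Λ z) :
    Λ ∘ₗ (f * g).ofConv = (f' * toConv (Λ ∘ₗ g.ofConv)).ofConv := by
  ext c
  simp [(ℛ R c).convMul_apply, h]

end Convolution

section

variable {R A B : Type*} [CommSemiring R] [Semiring A] [Algebra R A] [Semiring B] [Algebra R B]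

lemma TensorProduct.map_id_tmul_one_mul (φ : B →ₗ[R] B) (a : A) (z : A ⊗[R] B) :
    map LinearMap.id φ ((a ⊗ₜ 1) * z) = (a ⊗ₜ 1) * map LinearMap.id φ z := by
  induction z using TensorProduct.induction_on with
  | zero => simp
  | tmul x y => simp
  | add x y hx hy => simp [mul_add, hx, hy]

lemma TensorProduct.map_id_mul_tmul_one (φ : B →ₗ[R] B) (a : A) (z : A ⊗[R] B) :
    map LinearMap.id φ (z * (a ⊗ₜ 1)) = map LinearMap.id φ z * (a ⊗ₜ 1) := by
  induction z using TensorProduct.induction_on with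
  | zero => simp
  | tmul x y => simp
  | add x y hx hy => simp [add_mul, hx, hy]

end

section Bialgebra

variable {R H : Type*} [CommSemiring R] [Semiring H] [Bialgebra R H]

local notation "ι₁" => AlgHom.toLinearMap (Algebra.TensorProduct.includeLeft : H →ₐ[R] H ⊗[R] H)
local notation "ι₂" => AlgHom.toLinearMap (Algebra.TensorProduct.includeRight : H →ₐ[R] H ⊗[R] H)

lemma toConv_comul_eq_includeLeft_mul_includeRight :
    toConv (comul : H →ₗ[R] H ⊗[R] H) = toConv ι₁ * toConv ι₂ := by
  ext x
  simp [(ℛ R x).convMul_apply, ← (ℛ R x).eq]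

lemma toConv_comm_comp_comul_eq_includeRight_mul_includeLeft :
    toConv ((TensorProduct.comm R H H).toLinearMap ∘ₗ comul) = toConv ι₂ * toConv ι₁ := by
  ext x
  simp [(ℛ R x).convMul_apply, ← (ℛ R x).eq]

end Bialgebra

section HopfAlgebra

variable {R H B : Type*} [CommSemiring R] [Semiring H] [HopfAlgebra R H] [Semiring B] [Algebra R B]

open HopfAlgebra

local notation "ι₁" => AlgHom.toLinearMap (Algebra.TensorProduct.includeLeft : H →ₐ[R] H ⊗[R] H)
local notation "ι₂" => AlgHom.toLinearMap (Algebra.TensorProduct.includeRight : H →ₐ[R] H ⊗[R] H)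

lemma AlgHom.convMul_comp_antipode (f : H →ₐ[R] B) :
    toConv f.toLinearMap * toConv (f.toLinearMap ∘ₗ antipode R) = 1 := by
  ext x
  simp [(ℛ R x).convMul_apply, ← map_mul, ← map_sum, sum_mul_antipode_eq_algebraMap_counit]

lemma AlgHom.comp_antipode_convMul (f : H →ₐ[R] B) :
    toConv (f.toLinearMap ∘ₗ antipode R) * toConv f.toLinearMap = 1 := by
  ext x
  simp [(ℛ R x).convMul_apply, ← map_mul, ← map_sum, sum_antipode_mul_eq_algebraMap_counit]

lemma toConv_comul_comp_antipode :
    toConv (comul ∘ₗ antipode R : H →ₗ[R] H ⊗[R] H) =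
      toConv (ι₂ ∘ₗ antipode R) * toConv (ι₁ ∘ₗ antipode R) := by
  refine (left_inv_eq_right_inv (a := (toConv comul : WithConv (H →ₗ[R] H ⊗[R] H))) ?_
    LinearMap.comul_right_inv).symm
  rw [toConv_comul_eq_includeLeft_mul_includeRight, mul_assoc, ← mul_assoc (toConv (ι₁ ∘ₗ _)),
    AlgHom.comp_antipode_convMul, one_mul, AlgHom.comp_antipode_convMul]

end HopfAlgebra

section AdjointAction

variable {k H : Type*} [Field k] [Ring H] [HopfAlgebra k H] {E F : Type*} [Ring E] [Algebra k E]
  [Ring F] [Algebra k F]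

open HopfAlgebra

lemma comulL_eq_comul : comulL k H = comul := rfl

lemma toConv_adAct_flip (ρ : H →ₗ[k] E) (X : E) :
    toConv ((adAct k H ρ).flip X) =
      toConv (LinearMap.mulRight k X ∘ₗ ρ) * toConv (ρ ∘ₗ antipode k) := by
  ext h
  simp [(ℛ k h).convMul_apply, adAct, sandwich, bcomp, comulL, anti, ← (ℛ k h).eq, map_sum,
    mul_assoc]

lemma adAct_eq_sum (ρ : H →ₗ[k] E) (X : E) {h : H} {ι : Type*} (r : Repr k h ι) :
    adAct k H ρ h X = ∑ i ∈ r.index, ρ (r.left i) * X * ρ (antipode k (r.right i)) := by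
  change (toConv ((adAct k H ρ).flip X)) h = _
  rw [toConv_adAct_flip, r.convMul_apply]
  rfl

lemma adAct_id_mul (g h ξ : H) :
    adAct k H LinearMap.id (g * h) ξ = adAct k H LinearMap.id g (adAct k H LinearMap.id h ξ) := by
  simp [adAct_eq_sum _ _ ((ℛ k g).mul (ℛ k h)), adAct_eq_sum _ _ (ℛ k g),
    adAct_eq_sum _ _ (ℛ k h), Finset.sum_product, Finset.mul_sum, Finset.sum_mul,
    antipode_mul_antidistrib, mul_assoc]

lemma AlgHom.map_adAct (f : E →ₐ[k] F) (ρ : H →ₗ[k] E) (h : H) (X : E) :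
    f (adAct k H ρ h X) = adAct k H (f.toLinearMap ∘ₗ ρ) h (f X) := by
  simp [adAct_eq_sum _ _ (ℛ k h)]

lemma comulL_adAct_id (h ξ : H) :
    comulL k H (adAct k H LinearMap.id h ξ) = adAct k H (comulL k H) h (comulL k H ξ) :=
  AlgHom.map_adAct (Bialgebra.comulAlgHom k H) LinearMap.id h ξ

end AdjointAction

section QuasiPrimitive

variable {k H : Type*} [Field k] [Ring H] [HopfAlgebra k H]

open LinearMap HopfAlgebra

local notation "ι₁" => AlgHom.toLinearMap (Algebra.TensorProduct.includeLeft : H →ₐ[k] H ⊗[k] H)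
local notation "ι₂" => AlgHom.toLinearMap (Algebra.TensorProduct.includeRight : H →ₐ[k] H ⊗[k] H)

lemma IsTriangular.comul_mul_comm_eq {R Rinv : H ⊗[k] H} (hR : IsTriangular k H R Rinv)
    (x : H) :
    comul x * TensorProduct.comm k H H R =
      TensorProduct.comm k H H R * TensorProduct.comm k H H (comul x) := by
  have := congrArg (Algebra.TensorProduct.comm k H H) (hR.2.2.1 x)
  rw [map_mul, map_mul] at this
  exact (this.trans (congrArg (· * _) (TensorProduct.comm_comm k H H _))).symm

lemma map_id_adAct_flip_adAct (ξ h : H) (u : H ⊗[k] H) :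
    map id ((adAct k H id).flip (adAct k H id h ξ)) u =
      map id ((adAct k H id).flip ξ) (u * (1 ⊗ₜ h)) := by
  induction u using TensorProduct.induction_on with
  | zero => simp
  | tmul a b => simp [adAct_id_mul]
  | add x y hx hy => simp [add_mul, hx, hy]

lemma toConv_mulRight_map_id_adAct_comp_includeRight (ξ : H) (Y : H ⊗[k] H) :
    toConv (mulRight k (map id ((adAct k H id).flip ξ) Y) ∘ₗ ι₂) * toConv (ι₂ ∘ₗ antipode k) =
      toConv (map id ((adAct k H id).flip ξ) ∘ₗ mulRight k Y ∘ₗ ι₂) := by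
  ext y
  rw [(ℛ k y).convMul_apply]
  induction Y using TensorProduct.induction_on with
  | zero => simp
  | tmul a b => simp [adAct_eq_sum id _ (ℛ k y), adAct_id_mul, tmul_sum, mul_assoc]
  | add Y Z hY hZ =>
    simp only [map_add, comp_apply, mulRight_apply, mul_add, add_mul,
      Finset.sum_add_distrib] at hY hZ ⊢
    rw [hY, hZ]

lemma toConv_mulRight_map_id_adAct_comp_comul (ξ : H) (Y : H ⊗[k] H) :
    toConv (mulRight k (map id ((adAct k H id).flip ξ) Y) ∘ₗ comul) * toConv (ι₂ ∘ₗ antipode k) =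
      toConv (map id ((adAct k H id).flip ξ) ∘ₗ mulRight k Y ∘ₗ comul) := by
  have hcomul : (comul : H →ₗ[k] H ⊗[k] H) = (toConv ι₁ * toConv ι₂).ofConv :=
    congrArg ofConv toConv_comul_eq_includeLeft_mul_includeRight
  have hmulRight (c : H ⊗[k] H) : mulRight k c ∘ₗ comul =
      (toConv ι₁ * toConv (mulRight k c ∘ₗ ι₂)).ofConv := by
    rw [hcomul, comp_convMul_of_map_mul_left _ _ _ _ (fun _ _ => mul_assoc _ _ _)]
  rw [hmulRight, toConv_ofConv, mul_assoc, toConv_mulRight_map_id_adAct_comp_includeRight,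
    hmulRight, comp_convMul_of_map_mul_left _ _ _ (toConv ι₁)
      (fun x z => TensorProduct.map_id_tmul_one_mul _ x z), toConv_ofConv]

lemma adAct_comulL_tmul_one (h ξ : H) :
    adAct k H (comulL k H) h (ξ ⊗ₜ 1) = adAct k H id h ξ ⊗ₜ 1 := by
  suffices toConv ((adAct k H (comulL k H)).flip (ξ ⊗ₜ 1)) =
      toConv (ι₁ ∘ₗ (adAct k H id).flip ξ) from DFunLike.congr_fun (congrArg ofConv this) h
  have hΔ : toConv (mulRight k (ξ ⊗ₜ[k] (1 : H)) ∘ₗ comul) =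
      toConv (ι₁ ∘ₗ mulRight k ξ) * toConv ι₂ := by
    rw [← ofConv_toConv comul, toConv_comul_eq_includeLeft_mul_includeRight,
      comp_convMul_of_map_mul_right _ _ _ (toConv ι₂) (fun z c => by simp [mul_assoc]),
      toConv_ofConv]
    congr 2
    ext
    simp
  rw [toConv_adAct_flip, comulL_eq_comul, hΔ, toConv_comul_comp_antipode, mul_assoc,
    ← mul_assoc (toConv ι₂), AlgHom.convMul_comp_antipode, one_mul,
    ← ofConv_toConv ((adAct k H id).flip ξ), toConv_adAct_flip,
    LinearMap.algHom_comp_convMul_distrib, toConv_ofConv]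
  rfl

lemma adAct_comulL_map_id_adAct_flip (h ξ : H) (u : H ⊗[k] H)
    (hu : ∀ x : H, comul x * u = u * TensorProduct.comm k H H (comul x)) :
    adAct k H (comulL k H) h (map id ((adAct k H id).flip ξ) u) =
      map id ((adAct k H id).flip ξ) (u * (1 ⊗ₜ h)) := by
  set Λ : H ⊗[k] H →ₗ[k] H ⊗[k] H := map id ((adAct k H id).flip ξ)
  suffices toConv ((adAct k H (comulL k H)).flip (Λ u)) = toConv (Λ ∘ₗ mulLeft k u ∘ₗ ι₂) from
    DFunLike.congr_fun (congrArg ofConv this) h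
  have hcomm : (TensorProduct.comm k H H).toLinearMap ∘ₗ comul = (toConv ι₂ * toConv ι₁).ofConv :=
    congrArg ofConv toConv_comm_comp_comul_eq_includeRight_mul_includeLeft
  calc toConv ((adAct k H (comulL k H)).flip (Λ u))
      = toConv (mulRight k (Λ u) ∘ₗ comul) *
          (toConv (ι₂ ∘ₗ antipode k) * toConv (ι₁ ∘ₗ antipode k)) := by
        rw [toConv_adAct_flip, ← toConv_comul_comp_antipode]
        rfl
    _ = toConv (Λ ∘ₗ mulRight k u ∘ₗ comul) * toConv (ι₁ ∘ₗ antipode k) := by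
        rw [← mul_assoc, toConv_mulRight_map_id_adAct_comp_comul]
    _ = toConv (Λ ∘ₗ mulLeft k u ∘ₗ (TensorProduct.comm k H H).toLinearMap ∘ₗ comul) *
          toConv (ι₁ ∘ₗ antipode k) := by
        congr 3
        ext x
        exact hu x
    _ = toConv (Λ ∘ₗ mulLeft k u ∘ₗ ι₂) * toConv ι₁ * toConv (ι₁ ∘ₗ antipode k) := by
        rw [hcomm, comp_convMul_of_map_mul_right (mulLeft k u) _ (toConv ι₁) (toConv ι₁)
            (fun _ _ => (mul_assoc _ _ _).symm),
          comp_convMul_of_map_mul_right Λ _ (toConv ι₁) (toConv ι₁)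
            (fun z c => TensorProduct.map_id_mul_tmul_one _ c z), toConv_ofConv]
    _ = toConv (Λ ∘ₗ mulLeft k u ∘ₗ ι₂) := by
        rw [mul_assoc, AlgHom.convMul_comp_antipode, mul_one]

end QuasiPrimitive

theorem lieH_invariant_under_adjoint
    (R Rinv : H ⊗[k] H) (hR : IsTriangular k H R Rinv)
    (ξ : H)
    (hξ : IsQuasiPrimitive k H (comulL k H) (adAct k H LinearMap.id) R ξ) :
    ∀ h : H, IsQuasiPrimitive k H (comulL k H) (adAct k H LinearMap.id) R
      ((adAct k H LinearMap.id) h ξ) := by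
  intro h
  unfold IsQuasiPrimitive at hξ ⊢
  rw [comulL_adAct_id, hξ, map_add, adAct_comulL_tmul_one,
    adAct_comulL_map_id_adAct_flip h ξ _ hR.comul_mul_comm_eq, map_id_adAct_flip_adAct]

end
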